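/- Fix c > 1, set α = 1 − 1/(4c), and let b(x,w,v) = −x²·w·(wv − 1/2)^{−α}. Then for every point (x,w,v) ∈ ℝ × (0,∞) × (0,∞) with 1 ≤ wv ≤ c, the symmetric 3×3 matrix 𝔸(x,w,v) = D²b(x,w,v) + diag(2w/(16c²), 0, 0) (the Hessian of b in the variables (x,w,v) plus the diagonal matrix with entries 2w/(16c²), 0, 0) is negative semidefinite; equivalently, (𝔸(x,w,v)Δ, Δ) ≤ 0 for every vector Δ ∈ ℝ³. -/

import Mathlib

set_option maxHeartbeats 2000000
set_option linter.unusedVariables false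

/-- With `α = 1 - 1/(4c)`, the function `b(x,w,v) = -x² w (wv - 1/2)^{-α}`. -/
noncomputable def bFunAlpha (c : ℝ) : ℝ × ℝ × ℝ → ℝ := fun q =>
  -(q.1 ^ 2 * q.2.1 * (q.2.1 * q.2.2 - 1 / 2) ^ (-(1 - 1 / (4 * c))))


/-- auxiliary: positivity of the `s²` coefficient of the reduced quadratic form -/
theorem bFunAux_A1 (d u : ℝ) (hd : 0 < d) (hd4 : 4*d ≤ 1) (hu : 1 ≤ u) (hdu : 4*(d*u) ≤ 1) :
    0 ≤ (1 - d/4)*(1-d)*u*(1-d*u) - 2*(1/2 - d*u)^2 := by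
  nlinarith [mul_pos hd (lt_of_lt_of_le zero_lt_one hu), sq_nonneg (1 - d*u), sq_nonneg (u-1),
    mul_nonneg hd.le (sq_nonneg (u-1))]

/-- auxiliary: determinant condition for the reduced quadratic form -/
theorem bFunAux_det (d u : ℝ) (hd : 0 < d) (hd4 : 4*d ≤ 1) (hu : 1 ≤ u) (hdu : 4*(d*u) ≤ 1) :
    0 ≤ ((1 - d/4)*(1-d)*u*(1-d*u) - 2*(1/2 - d*u)^2) * ((1-d)*d*(2+d)/4)
        - ((1-d)*d*(u - 1/4 + d*u/4))^2 := by
  have hu0 : (0:ℝ) < u := lt_of_lt_of_le zero_lt_one hu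
  have h1 : (0:ℝ) ≤ (u - 1) * (2 - 6*(d*u)) := mul_nonneg (by linarith) (by linarith)
  have h2 : (0:ℝ) ≤ d * (1 - 4*(d*u)) := mul_nonneg hd.le (by linarith)
  have h3 : (0:ℝ) ≤ (d*u) * (1 - 4*(d*u)) := mul_nonneg (mul_nonneg hd.le hu0.le) (by linarith)
  have h4 : (0:ℝ) ≤ d^2 * (1 - 4*(d*u)) := mul_nonneg (sq_nonneg d) (by linarith)
  have h5 : (0:ℝ) ≤ d^3 * u^2 := mul_nonneg (pow_nonneg hd.le 3) (sq_nonneg u)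
  have hD2 : 0 ≤ ((1 - d/4)*(1-d)*u*(1-d*u) - 2*(1/2 - d*u)^2) * (2+d)
      - 4*(1-d)*d*(u - 1/4 + d*u/4)^2 := by
    nlinarith [h1, h2, h3, h4, h5, sq_nonneg d, mul_nonneg h2 hd.le, mul_nonneg h1 hd.le]
  have hfac : (0:ℝ) ≤ (1-d)*d/4 := by nlinarith
  nlinarith [mul_nonneg hfac hD2]

/-- auxiliary: the reduced 2×2 quadratic form bound -/
theorem bFunAux_quad (d u s τ : ℝ) (hd : 0 < d) (hd4 : 4*d ≤ 1) (hu : 1 ≤ u) (hdu : 4*(d*u) ≤ 1) :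
    2*((1/2 - d*u)*s + (1-d)*τ)^2
      ≤ (1 - d/4)*(1-d)*(u*(1-d*u)*s^2 + 2*(1-d*u)*s*τ + (2-d)*τ^2) := by
  have hA1 := bFunAux_A1 d u hd hd4 hu hdu
  have hdet := bFunAux_det d u hd hd4 hu hdu
  have hC1 : (0:ℝ) < (1-d)*d*(2+d)/4 := by nlinarith [mul_pos hd (show (0:ℝ) < 1 - d by linarith)]
  have key : 0 ≤ ((1-d)*d*(2+d)/4) *
      ((1 - d/4)*(1-d)*(u*(1-d*u)*s^2 + 2*(1-d*u)*s*τ + (2-d)*τ^2)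
        - 2*((1/2 - d*u)*s + (1-d)*τ)^2) := by
    nlinarith [sq_nonneg (((1-d)*d*(2+d)/4)*τ + ((1-d)*d*(u - 1/4 + d*u/4))*s),
      mul_nonneg hdet (sq_nonneg s)]
  nlinarith [key, hC1, mul_pos hC1 hC1]

/-- the second directional derivative as an iterated 1D derivative along a line -/
theorem bFunAux_secondDeriv_line {E : Type*} [NormedAddCommGroup E] [NormedSpace ℝ E]
    {f : E → ℝ} {p : E} (hf : ContDiffAt ℝ 2 f p) (Δ : E) :
    iteratedFDeriv ℝ 2 f p ![Δ, Δ] = deriv (deriv (fun t : ℝ => f (p + t • Δ))) 0 := by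
  rw [iteratedFDeriv_two_apply]
  simp only [Matrix.cons_val_zero, Matrix.cons_val_one, Matrix.head_cons]
  obtain ⟨u, hu, hcd⟩ := hf.contDiffOn (le_refl 2) (by simp)
  obtain ⟨U, hUu, hUo, hpU⟩ := mem_nhds_iff.mp hu
  have hφd : ∀ t : ℝ, HasDerivAt (fun t : ℝ => p + t • Δ) Δ t := fun t => by
    simpa using ((hasDerivAt_id t).smul_const Δ).const_add p
  have hφc : Continuous (fun t : ℝ => p + t • Δ) := by continuity
  have hVo : IsOpen ((fun t : ℝ => p + t • Δ) ⁻¹' U) := hUo.preimage hφc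
  have h0V : (0:ℝ) ∈ (fun t : ℝ => p + t • Δ) ⁻¹' U := by simp [hpU]
  have hder : ∀ t ∈ (fun t : ℝ => p + t • Δ) ⁻¹' U,
      HasDerivAt (fun t : ℝ => f (p + t • Δ)) (fderiv ℝ f (p + t • Δ) Δ) t := by
    intro t ht
    have hdf : DifferentiableAt ℝ f (p + t • Δ) :=
      (((hcd.differentiableOn (by norm_num)).mono hUu).differentiableAt (hUo.mem_nhds ht))
    exact hdf.hasFDerivAt.comp_hasDerivAt t (hφd t)
  have heq : deriv (fun t : ℝ => f (p + t • Δ)) =ᶠ[nhds 0]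
      fun t : ℝ => fderiv ℝ f (p + t • Δ) Δ :=
    Filter.eventuallyEq_of_mem (hVo.mem_nhds h0V) (fun t ht => (hder t ht).deriv)
  rw [heq.deriv_eq]
  have hd2 : DifferentiableAt ℝ (fderiv ℝ f) p :=
    (hf.fderiv_right (m := 1) (by norm_num)).differentiableAt (by norm_num)
  have h1 : HasDerivAt (fun t : ℝ => fderiv ℝ f (p + t • Δ)) (fderiv ℝ (fderiv ℝ f) p Δ) 0 := by
    have := HasFDerivAt.comp_hasDerivAt_of_eq (hl := hd2.hasFDerivAt) (hf := hφd 0) (hy := by simp)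
    exact this
  have h2 : HasDerivAt (fun t : ℝ => fderiv ℝ f (p + t • Δ) Δ)
      ((fderiv ℝ (fderiv ℝ f) p Δ) Δ + (fderiv ℝ f (p + (0:ℝ) • Δ)) 0) 0 :=
    h1.clm_apply (hasDerivAt_const 0 Δ)
  rw [h2.deriv]
  simp

/-- the restriction of `bFunAlpha` to a line -/
noncomputable def bFunLine (c x w v a s m : ℝ) : ℝ → ℝ := fun t =>
  -((x + t*a)^2 * (w + t*s) * ((w + t*s)*(v + t*m) - 1/2) ^ (-(1 - 1/(4*c))))

/-- the derivative of `bFunLine` -/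
noncomputable def bFunLine' (c x w v a s m : ℝ) : ℝ → ℝ := fun t =>
  -((2*(x + t*a)*a*(w + t*s) + (x + t*a)^2*s)
        * ((w + t*s)*(v + t*m) - 1/2) ^ (-(1 - 1/(4*c)))
    + (x + t*a)^2*(w + t*s)
        * ((s*(v + t*m) + (w + t*s)*m) * (-(1 - 1/(4*c)))
            * ((w + t*s)*(v + t*m) - 1/2) ^ (-(1 - 1/(4*c)) - 1)))

/-- the second derivative of `bFunLine` at `0` -/
noncomputable def bFunQ2 (c x w v a s m : ℝ) : ℝ :=
  -2*w*((w*v - 1/2) ^ (-(1 - 1/(4*c))))*a^2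
  - 4*a*x*s*((w*v - 1/2) ^ (-(1 - 1/(4*c))))
  + 2*(1 - 1/(4*c))*(2*a*x*w + x^2*s)*((w*v - 1/2) ^ (-(1 - 1/(4*c)) - 1))*(s*v + w*m)
  - (1 - 1/(4*c))*((1 - 1/(4*c))+1)*x^2*w*((w*v - 1/2) ^ (-(1 - 1/(4*c)) - 1 - 1))*(s*v + w*m)^2
  + 2*(1 - 1/(4*c))*x^2*w*s*m*((w*v - 1/2) ^ (-(1 - 1/(4*c)) - 1))

theorem bFunLine_hasDeriv (c x w v a s m t : ℝ) (ht : 0 < (w + t*s)*(v + t*m) - 1/2) :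
    HasDerivAt (bFunLine c x w v a s m) (bFunLine' c x w v a s m t) t := by
  have hX : HasDerivAt (fun t : ℝ => x + t*a) a t := (hasDerivAt_mul_const a).const_add x
  have hW : HasDerivAt (fun t : ℝ => w + t*s) s t := (hasDerivAt_mul_const s).const_add w
  have hV : HasDerivAt (fun t : ℝ => v + t*m) m t := (hasDerivAt_mul_const m).const_add v
  have hR : HasDerivAt (fun t : ℝ => (w + t*s)*(v + t*m) - 1/2)
      (s*(v + t*m) + (w + t*s)*m) t := (hW.mul hV).sub_const (1/2)
  have hRP := hR.rpow_const (p := -(1 - 1/(4*c))) (Or.inl (ne_of_gt ht))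
  have htot := (((hX.pow 2).mul hW).mul hRP).neg
  refine htot.congr_deriv ?_
  simp only [bFunLine']
  norm_num

theorem bFunLine'_hasDeriv (c x w v a s m : ℝ) (hr : 0 < w*v - 1/2) :
    HasDerivAt (bFunLine' c x w v a s m) (bFunQ2 c x w v a s m) 0 := by
  have hX : HasDerivAt (fun t : ℝ => x + t*a) a 0 := (hasDerivAt_mul_const a).const_add x
  have hW : HasDerivAt (fun t : ℝ => w + t*s) s 0 := (hasDerivAt_mul_const s).const_add w
  have hV : HasDerivAt (fun t : ℝ => v + t*m) m 0 := (hasDerivAt_mul_const m).const_add v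
  have hR : HasDerivAt (fun t : ℝ => (w + t*s)*(v + t*m) - 1/2)
      (s*(v + 0*m) + (w + 0*s)*m) 0 := (hW.mul hV).sub_const (1/2)
  have hne : (w + 0*s)*(v + 0*m) - 1/2 ≠ 0 := by
    norm_num
    intro h
    nlinarith [hr]
  have hRP := hR.rpow_const (p := -(1 - 1/(4*c))) (Or.inl hne)
  have hRP1 := hR.rpow_const (p := -(1 - 1/(4*c)) - 1) (Or.inl hne)
  have hU1 : HasDerivAt (fun t : ℝ => 2*(x + t*a)*a*(w + t*s) + (x + t*a)^2*s)
      ((2*a*a)*(w + 0*s) + 2*(x + 0*a)*a*s + (2*(x + 0*a)^(2-1)*a)*s) 0 := by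
    have h1 := (((hX.const_mul 2).mul_const a).mul hW)
    have h2 := (hX.pow 2).mul_const s
    have := h1.add h2
    refine this.congr_deriv ?_
    norm_num
  have hS : HasDerivAt (fun t : ℝ => s*(v + t*m) + (w + t*s)*m) (s*m + s*m) 0 :=
    (hV.const_mul s).add (hW.mul_const m)
  have hSecond := ((hX.pow 2).mul hW).mul ((hS.mul_const (-(1 - 1/(4*c)))).mul hRP1)
  have htot := ((hU1.mul hRP).add hSecond).neg
  have h0 : HasDerivAt (bFunLine' c x w v a s m) (bFunQ2 c x w v a s m) 0 := by
    refine htot.congr_deriv ?_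
    simp only [bFunQ2]
    norm_num
    ring
  exact h0

theorem bFunLine_secondDeriv (c x w v a s m : ℝ) (hr : 0 < w*v - 1/2) :
    deriv (deriv (bFunLine c x w v a s m)) 0 = bFunQ2 c x w v a s m := by
  have hUo : IsOpen {t : ℝ | 0 < (w + t*s)*(v + t*m) - 1/2} :=
    isOpen_lt continuous_const (by continuity)
  have h0U : (0:ℝ) ∈ {t : ℝ | 0 < (w + t*s)*(v + t*m) - 1/2} := by
    simp only [Set.mem_setOf_eq, zero_mul, add_zero]
    exact hr
  have hEv : deriv (bFunLine c x w v a s m) =ᶠ[nhds 0] bFunLine' c x w v a s m :=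
    Filter.eventuallyEq_of_mem (hUo.mem_nhds h0U)
      (fun t ht => (bFunLine_hasDeriv c x w v a s m t ht).deriv)
  rw [hEv.deriv_eq, (bFunLine'_hasDeriv c x w v a s m hr).deriv]

theorem bFunQ2_nonpos (c x w v a s m : ℝ) (hc : 1 < c) (hw : 0 < w) (hv : 0 < v)
    (h1 : 1 ≤ w * v) (h2 : w * v ≤ c) :
    bFunQ2 c x w v a s m + 2 * w / (16 * c ^ 2) * a ^ 2 ≤ 0 := by
  have hc0 : (0:ℝ) < c := by linarith
  have hrpos : (0:ℝ) < w*v - 1/2 := by linarith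
  -- rpow factorizations
  have hP2 : (w*v - 1/2:ℝ) ^ (-(1 - 1/(4*c)))
      = (w*v - 1/2) ^ (-(1 - 1/(4*c)) - 1 - 1) * (w*v - 1/2)^2 := by
    have h := Real.rpow_add hrpos (-(1 - 1/(4*c)) - 1 - 1) (((2:ℕ)):ℝ)
    rw [Real.rpow_natCast] at h
    rw [show (-(1 - 1/(4*c)) - 1 - 1) + (((2:ℕ)):ℝ) = -(1 - 1/(4*c)) by push_cast; ring] at h
    exact h
  have hP1 : (w*v - 1/2:ℝ) ^ (-(1 - 1/(4*c)) - 1)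
      = (w*v - 1/2) ^ (-(1 - 1/(4*c)) - 1 - 1) * (w*v - 1/2) := by
    have h := Real.rpow_add hrpos (-(1 - 1/(4*c)) - 1 - 1) 1
    rw [Real.rpow_one] at h
    rw [show (-(1 - 1/(4*c)) - 1 - 1) + (1:ℝ) = -(1 - 1/(4*c)) - 1 by ring] at h
    exact h
  have hPpos : (0:ℝ) < (w*v - 1/2) ^ (-(1 - 1/(4*c)) - 1 - 1) :=
    Real.rpow_pos_of_pos hrpos _
  -- lower bound for r^(-α)
  have hA1 : (0:ℝ) < 1 - 1/(4*c) := by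
    have : 1/(4*c) < 1 := by
      rw [div_lt_one (by linarith)]
      linarith
    linarith
  have hrA : 1/c ≤ (w*v - 1/2:ℝ) ^ (-(1 - 1/(4*c))) := by
    rcases le_or_gt (w*v - 1/2) 1 with h | h
    · have h0 : (w*v - 1/2:ℝ) ^ (0:ℝ) ≤ (w*v - 1/2) ^ (-(1 - 1/(4*c))) :=
        Real.rpow_le_rpow_of_exponent_ge hrpos h (by linarith)
      rw [Real.rpow_zero] at h0
      have : 1/c ≤ 1 := by
        rw [div_le_one (by linarith)]
        linarith
      linarith
    · have h4c : (0:ℝ) < 1/(4*c) := by positivity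
      have hA2 : (w*v - 1/2:ℝ) ^ (1 - 1/(4*c)) ≤ (w*v - 1/2) ^ (1:ℝ) :=
        Real.rpow_le_rpow_of_exponent_le h.le (by linarith)
      rw [Real.rpow_one] at hA2
      have hle : (w*v - 1/2:ℝ) ^ (1 - 1/(4*c)) ≤ c := by linarith
      have hposA : (0:ℝ) < (w*v - 1/2) ^ (1 - 1/(4*c)) := Real.rpow_pos_of_pos hrpos _
      rw [Real.rpow_neg hrpos.le, ← one_div]
      exact one_div_le_one_div_of_le hposA hle
  -- the quadratic form inequality
  have hd : (0:ℝ) < 1/(4*c) := by positivity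
  have hd4 : 4*(1/(4*c)) ≤ 1 := by
    rw [show 4*(1/(4*c)) = 1/c by field_simp]
    rw [div_le_one (by linarith)]
    linarith
  have hdu4 : 4*((1/(4*c))*(w*v)) ≤ 1 := by
    rw [show 4*((1/(4*c))*(w*v)) = (w*v)/c by field_simp]
    rw [div_le_one (by linarith)]
    linarith
  have hkey := bFunAux_quad (1/(4*c)) (w*v) s (w^2*m) hd hd4 h1 hdu4
  have hKscaled := mul_le_mul_of_nonneg_left hkey
    (show (0:ℝ) ≤ 2*x^2*(w*v - 1/2)^2 by positivity)
  -- F ≤ 0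
  have hκ : (0:ℝ) < 1 - 1/(16*c) := by
    have : 1/(16*c) < 1 := by
      rw [div_lt_one (by linarith)]
      linarith
    linarith
  have hCpos : (0:ℝ) < 2*((1 - 1/(16*c))*w*(w*v - 1/2)^2) := by positivity
  have hprod : 2*((1 - 1/(16*c))*w*(w*v - 1/2)^2) *
      (-2*(1 - 1/(16*c))*w*(w*v - 1/2)^2*a^2 - 4*a*x*s*(w*v - 1/2)^2
        + 2*(1 - 1/(4*c))*(2*a*x*w + x^2*s)*(w*v - 1/2)*(s*v + w*m)
        - (1 - 1/(4*c))*((1 - 1/(4*c))+1)*x^2*w*(s*v + w*m)^2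
        + 2*(1 - 1/(4*c))*x^2*w*s*m*(w*v - 1/2)) ≤ 0 := by
    have hid : 2*((1 - 1/(16*c))*w*(w*v - 1/2)^2) *
      (-2*(1 - 1/(16*c))*w*(w*v - 1/2)^2*a^2 - 4*a*x*s*(w*v - 1/2)^2
        + 2*(1 - 1/(4*c))*(2*a*x*w + x^2*s)*(w*v - 1/2)*(s*v + w*m)
        - (1 - 1/(4*c))*((1 - 1/(4*c))+1)*x^2*w*(s*v + w*m)^2
        + 2*(1 - 1/(4*c))*x^2*w*s*m*(w*v - 1/2))
      = -(2*((1 - 1/(16*c))*w*(w*v - 1/2)^2)*a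
          - 2*x*(w*v - 1/2)*((1/2 - (1/(4*c))*(w*v))*s + (1 - 1/(4*c))*(w^2*m)))^2
        + (2 * x ^ 2 * (w * v - 1/2) ^ 2 * (2 * ((1/2 - 1/(4*c) * (w*v)) * s + (1 - 1/(4*c)) * (w^2*m)) ^ 2))
        - (2 * x ^ 2 * (w * v - 1/2) ^ 2 *
            ((1 - 1/(4*c)/4) * (1 - 1/(4*c)) *
              (w * v * (1 - 1/(4*c) * (w*v)) * s ^ 2 + 2 * (1 - 1/(4*c) * (w*v)) * s * (w^2*m) +
                (2 - 1/(4*c)) * (w^2*m) ^ 2))) := by ring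
    rw [hid]
    have hsq := sq_nonneg (2*((1 - 1/(16*c))*w*(w*v - 1/2)^2)*a
          - 2*x*(w*v - 1/2)*((1/2 - (1/(4*c))*(w*v))*s + (1 - 1/(4*c))*(w^2*m)))
    linarith [hKscaled, hsq]
  have hFle : (-2*(1 - 1/(16*c))*w*(w*v - 1/2)^2*a^2 - 4*a*x*s*(w*v - 1/2)^2
        + 2*(1 - 1/(4*c))*(2*a*x*w + x^2*s)*(w*v - 1/2)*(s*v + w*m)
        - (1 - 1/(4*c))*((1 - 1/(4*c))+1)*x^2*w*(s*v + w*m)^2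
        + 2*(1 - 1/(4*c))*x^2*w*s*m*(w*v - 1/2)) ≤ 0 :=
    le_of_mul_le_mul_left (by simpa using hprod) hCpos
  -- assemble
  have hident : bFunQ2 c x w v a s m + 2 * w / (16 * c ^ 2) * a ^ 2
      = ((w*v - 1/2) ^ (-(1 - 1/(4*c)) - 1 - 1)) *
          (-2*(1 - 1/(16*c))*w*(w*v - 1/2)^2*a^2 - 4*a*x*s*(w*v - 1/2)^2
            + 2*(1 - 1/(4*c))*(2*a*x*w + x^2*s)*(w*v - 1/2)*(s*v + w*m)
            - (1 - 1/(4*c))*((1 - 1/(4*c))+1)*x^2*w*(s*v + w*m)^2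
            + 2*(1 - 1/(4*c))*x^2*w*s*m*(w*v - 1/2))
        + (a^2*w/(8*c)) * (1/c - ((w*v - 1/2) ^ (-(1 - 1/(4*c)) - 1 - 1)) * (w*v - 1/2)^2) := by
    simp only [bFunQ2]
    rw [hP2, hP1]
    ring
  rw [hident]
  have ht1 : ((w*v - 1/2) ^ (-(1 - 1/(4*c)) - 1 - 1)) *
      (-2*(1 - 1/(16*c))*w*(w*v - 1/2)^2*a^2 - 4*a*x*s*(w*v - 1/2)^2
        + 2*(1 - 1/(4*c))*(2*a*x*w + x^2*s)*(w*v - 1/2)*(s*v + w*m)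
        - (1 - 1/(4*c))*((1 - 1/(4*c))+1)*x^2*w*(s*v + w*m)^2
        + 2*(1 - 1/(4*c))*x^2*w*s*m*(w*v - 1/2)) ≤ 0 :=
    mul_nonpos_iff.mpr (Or.inl ⟨hPpos.le, hFle⟩)
  have ht2 : (a^2*w/(8*c)) * (1/c - ((w*v - 1/2) ^ (-(1 - 1/(4*c)) - 1 - 1)) * (w*v - 1/2)^2) ≤ 0 := by
    have h2' : 1/c ≤ ((w*v - 1/2) ^ (-(1 - 1/(4*c)) - 1 - 1)) * (w*v - 1/2)^2 := by
      rw [← hP2]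
      exact hrA
    exact mul_nonpos_iff.mpr (Or.inl ⟨by positivity, by linarith⟩)
  linarith

theorem bFunAlpha_matrix_nonpositive' (c : ℝ) (hc : 1 < c) (x w v : ℝ)
    (hw : 0 < w) (hv : 0 < v) (h1 : 1 ≤ w * v) (h2 : w * v ≤ c)
    (Δ : ℝ × ℝ × ℝ) :
    (iteratedFDeriv ℝ 2 (fun q : ℝ × ℝ × ℝ =>
        -(q.1 ^ 2 * q.2.1 * (q.2.1 * q.2.2 - 1 / 2) ^ (-(1 - 1 / (4 * c))))) (x, w, v)) ![Δ, Δ]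
      + 2 * w / (16 * c ^ 2) * Δ.1 ^ 2 ≤ 0 := by
  obtain ⟨a, s, m⟩ := Δ
  have hrpos : (0:ℝ) < w*v - 1/2 := by linarith
  have hcd : ContDiffAt ℝ 2 (fun q : ℝ × ℝ × ℝ =>
      -(q.1 ^ 2 * q.2.1 * (q.2.1 * q.2.2 - 1 / 2) ^ (-(1 - 1 / (4 * c))))) (x, w, v) := by
    have hbase : ContDiffAt ℝ 2 (fun q : ℝ×ℝ×ℝ => q.2.1 * q.2.2 - 1/2) (x,w,v) := by fun_prop
    have hrpow : ContDiffAt ℝ 2 (fun q : ℝ×ℝ×ℝ =>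
        (q.2.1*q.2.2 - 1/2) ^ (-(1 - 1/(4*c)))) (x,w,v) :=
      hbase.rpow_const_of_ne (by simp only []; intro h; nlinarith)
    have hpoly : ContDiffAt ℝ 2 (fun q : ℝ×ℝ×ℝ => q.1 ^ 2 * q.2.1) (x,w,v) := by fun_prop
    exact (hpoly.mul hrpow).neg
  rw [bFunAux_secondDeriv_line hcd (a, s, m)]
  have hfun : (fun t : ℝ => (fun q : ℝ × ℝ × ℝ =>
      -(q.1 ^ 2 * q.2.1 * (q.2.1 * q.2.2 - 1 / 2) ^ (-(1 - 1 / (4 * c)))))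
        ((x, w, v) + t • (a, s, m))) = bFunLine c x w v a s m := by
    funext t
    simp only [bFunLine, Prod.smul_mk, Prod.mk_add_mk, smul_eq_mul]
  rw [hfun, bFunLine_secondDeriv c x w v a s m hrpos]
  exact bFunQ2_nonpos c x w v a s m hc hw hv h1 h2


/-- On the region `1 ≤ wv ≤ c`, the matrix `𝔸(x,w,v) = D²b(x,w,v) + diag(2w/(16c²), 0, 0)` is
negative semidefinite: its quadratic form is nonpositive on every vector `Δ ∈ ℝ³`. -/
theorem bFunAlpha_matrix_nonpositive (c : ℝ) (hc : 1 < c) (x w v : ℝ)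
    (hw : 0 < w) (hv : 0 < v) (h1 : 1 ≤ w * v) (h2 : w * v ≤ c)
    (Δ : ℝ × ℝ × ℝ) :
    (iteratedFDeriv ℝ 2 (bFunAlpha c) (x, w, v)) ![Δ, Δ] + 2 * w / (16 * c ^ 2) * Δ.1 ^ 2 ≤ 0 :=
  bFunAlpha_matrix_nonpositive' c hc x w v hw hv h1 h2 Δ
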